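/- Let G be a bridgeless cubic graph with even factor F, and let C6 = v1v2v3v4v5v6 be a chordless 6-circuit whose boundary edges lie in three distinct circuits C1, C2, C3 of F, with v1v2 ∈ C1, v3v4 ∈ C2, v5v6 ∈ C3. Then F' = (F − {v1v2, v3v4, v5v6}) ∪ {v1v6, v2v3, v4v5} is an even factor merging C1, C2, C3 into one circuit, and c(F) − c(F') = 4. -/

import Mathlib

open SimpleGraph

variable {V : Type*}

noncomputable def deg (F : SimpleGraph V) (v : V) : ℕ := Nat.card (F.neighborSet v)

def IsCubic (G : SimpleGraph V) : Prop := ∀ v, deg G v = 3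

def Bridgeless (G : SimpleGraph V) : Prop := ∀ e : Sym2 V, ¬ G.IsBridge e

def IsEvenFactor (G F : SimpleGraph V) : Prop := F ≤ G ∧ ∀ v, deg F v = 0 ∨ deg F v = 2

def Is2Factor (G F : SimpleGraph V) : Prop := F ≤ G ∧ ∀ v, deg F v = 2

noncomputable def numIso (F : SimpleGraph V) : ℕ := Nat.card {v : V // deg F v = 0}

def IsCircuitOf (F : SimpleGraph V) (C : Set V) : Prop :=
  ∃ v, deg F v ≠ 0 ∧ C = {u | F.Reachable v u}

noncomputable def numCirc (F : SimpleGraph V) : ℕ := Nat.card {C : Set V // IsCircuitOf F C}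

noncomputable def cost [Fintype V] (F : SimpleGraph V) : ℝ :=
  (Fintype.card V : ℝ) + 2 * (numCirc F : ℝ) + (numIso F : ℝ)

/-! ### Auxiliary lemmas -/

lemma deg_ncard (F : SimpleGraph V) (v : V) : deg F v = (F.neighborSet v).ncard :=
  Nat.card_coe_set_eq _

lemma deg_ne_zero_of_adj [Finite V] {F : SimpleGraph V} {x y : V} (h : F.Adj x y) :
    deg F x ≠ 0 := by
  rw [deg_ncard]
  exact ((Set.ncard_pos (Set.toFinite _)).mpr ⟨y, h⟩).ne'

lemma walk_closed {H : SimpleGraph V} {Q : V → Prop}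
    (step : ∀ x y, Q x → H.Adj x y → Q y) :
    ∀ {v u : V}, H.Walk v u → Q v → Q u
  | _, _, SimpleGraph.Walk.nil, hv => hv
  | _, _, SimpleGraph.Walk.cons h p, hv => walk_closed step p (step _ _ hv h)

lemma reach_closed {H : SimpleGraph V} {Q : V → Prop}
    (step : ∀ x y, Q x → H.Adj x y → Q y) {v u : V} (h : H.Reachable v u) (hv : Q v) : Q u :=
  walk_closed step h.some hv

lemma walk_support_closed {H : SimpleGraph V} {Q : V → Prop}
    (step : ∀ x y, Q x → H.Adj x y → Q y) :
    ∀ {v u : V} (w : H.Walk v u), Q v → ∀ z ∈ w.support, Q z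
  | _, _, SimpleGraph.Walk.nil, hv, z, hz => by
      rw [SimpleGraph.Walk.support_nil, List.mem_singleton] at hz; subst hz; exact hv
  | _, _, SimpleGraph.Walk.cons h p, hv, z, hz => by
      rw [SimpleGraph.Walk.support_cons, List.mem_cons] at hz
      rcases hz with rfl | hz
      · exact hv
      · exact walk_support_closed step p (step _ _ hv h) z hz

lemma path_start {F : SimpleGraph V} {a b u : V} (p : F.Walk a u) (hp : p.IsPath)
    (he : s(a, b) ∈ p.edges) :
    ∃ q : F.Walk b u, a ∉ q.support ∧ q.edges ⊆ p.edges := by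
  cases p with
  | nil => simp at he
  | @cons _ c _ h q =>
    rw [SimpleGraph.Walk.cons_isPath_iff] at hp
    rw [SimpleGraph.Walk.edges_cons, List.mem_cons] at he
    rcases he with he | he
    · have hbc : b = c := by
        rcases Sym2.eq_iff.mp he with ⟨-, h2⟩ | ⟨h1, -⟩
        · exact h2
        · exact absurd h1 h.ne
      subst hbc
      exact ⟨q, hp.2, by intro e he'; simp [he']⟩
    · exact absurd (SimpleGraph.Walk.fst_mem_support_of_mem_edges q he) hp.2

lemma degree_eq_ncard [Fintype V] (H : SimpleGraph V) [DecidableRel H.Adj] (x : V) :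
    H.degree x = (H.neighborSet x).ncard := by
  rw [← SimpleGraph.card_neighborSet_eq_degree, Set.ncard_eq_toFinset_card']
  simp [Set.toFinset_card]

lemma no_bridge_of_even [Fintype V] (F : SimpleGraph V)
    (hdeg : ∀ v, deg F v = 0 ∨ deg F v = 2) {a b : V} (hab : F.Adj a b) :
    (F.deleteEdges {s(a, b)}).Reachable a b := by
  classical
  by_contra hne
  set D := F.deleteEdges {s(a, b)} with hD
  let M : SimpleGraph V :=
    { Adj := fun x y => D.Adj x y ∧ D.Reachable a x ∧ D.Reachable a y
      symm := ⟨by rintro x y ⟨h1, h2, h3⟩; exact ⟨h1.symm, h3, h2⟩⟩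
      loopless := ⟨fun x hx => D.loopless.irrefl x hx.1⟩ }
  have hMdeg : ∀ x, M.degree x = (M.neighborSet x).ncard := fun x => by convert degree_eq_ncard M x
  have hnbra : M.neighborSet a = F.neighborSet a \ {b} := by
    ext y
    simp only [SimpleGraph.mem_neighborSet, Set.mem_diff, Set.mem_singleton_iff]
    constructor
    · rintro ⟨h1, -, -⟩
      rw [hD, SimpleGraph.deleteEdges_adj, Set.mem_singleton_iff] at h1
      refine ⟨h1.1, fun hyb => h1.2 ?_⟩
      rw [hyb]
    · rintro ⟨h1, h2⟩
      have hDay : D.Adj a y := by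
        rw [hD, SimpleGraph.deleteEdges_adj, Set.mem_singleton_iff]
        refine ⟨h1, fun hc => h2 ?_⟩
        rcases Sym2.eq_iff.mp hc with ⟨-, h'⟩ | ⟨h', h''⟩
        · exact h'
        · exact absurd h' hab.ne
      exact ⟨hDay, SimpleGraph.Reachable.refl a, hDay.reachable⟩
  have hFa2 : (F.neighborSet a).ncard = 2 := by
    rw [← deg_ncard]; exact (hdeg a).resolve_left (deg_ne_zero_of_adj hab)
  have hdega : M.degree a = 1 := by
    rw [hMdeg, hnbra,
      Set.ncard_diff_singleton_of_mem (show b ∈ F.neighborSet a from hab),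
      hFa2]
  have hdegx : ∀ x, x ≠ a → ¬ Odd (M.degree x) := by
    intro x hxa
    by_cases hrx : D.Reachable a x
    · have hxb : x ≠ b := fun h => hne (h ▸ hrx)
      have hnbx : M.neighborSet x = F.neighborSet x := by
        ext y
        simp only [SimpleGraph.mem_neighborSet]
        constructor
        · rintro ⟨h1, -, -⟩
          rw [hD, SimpleGraph.deleteEdges_adj] at h1
          exact h1.1
        · intro h1
          have hDxy : D.Adj x y := by
            rw [hD, SimpleGraph.deleteEdges_adj, Set.mem_singleton_iff]
            refine ⟨h1, fun hc => ?_⟩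
            rcases Sym2.eq_iff.mp hc with ⟨h', -⟩ | ⟨h', -⟩
            · exact hxa h'
            · exact hxb h'
          exact ⟨hDxy, hrx, hrx.trans hDxy.reachable⟩
      have hFx : deg F x = 2 := by
        refine (hdeg x).resolve_left ?_
        obtain ⟨w⟩ := hrx
        cases w.reverse with
        | nil => exact absurd rfl hxa
        | cons h p =>
          rw [hD, SimpleGraph.deleteEdges_adj] at h
          exact deg_ne_zero_of_adj h.1
      rw [hMdeg, hnbx, ← deg_ncard, hFx]
      decide
    · have hnbx : M.neighborSet x = ∅ := by
        ext y
        simp only [SimpleGraph.mem_neighborSet, Set.mem_empty_iff_false, iff_false]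
        rintro ⟨-, h2, -⟩
        exact hrx h2
      rw [hMdeg, hnbx]
      simp
  have heven := M.even_card_odd_degree_vertices
  have hsingle : (Finset.univ.filter fun v => Odd (M.degree v)) = {a} := by
    ext x
    simp only [Finset.mem_filter, Finset.mem_univ, true_and, Finset.mem_singleton]
    constructor
    · intro h
      by_contra hxa
      exact hdegx x hxa h
    · rintro rfl
      rw [hdega]
      exact odd_one
  replace heven : Even ({a} : Finset V).card := by rw [← hsingle]; convert heven
  simp at heven

lemma circuit_closed {F : SimpleGraph V} {C : Set V} (h : IsCircuitOf F C) {x y : V}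
    (hx : x ∈ C) (hxy : F.Adj x y) : y ∈ C := by
  obtain ⟨v, -, rfl⟩ := h
  exact (Set.mem_setOf.mp hx).trans hxy.reachable

lemma circuit_reach {F : SimpleGraph V} {C : Set V} (h : IsCircuitOf F C) {x y : V}
    (hx : x ∈ C) (hy : y ∈ C) : F.Reachable x y := by
  obtain ⟨v, -, rfl⟩ := h
  exact (Set.mem_setOf.mp hx).symm.trans (Set.mem_setOf.mp hy)

lemma circuit_eq_of_mem {F : SimpleGraph V} {C C' : Set V} (h : IsCircuitOf F C)
    (h' : IsCircuitOf F C') {x : V} (hx : x ∈ C) (hx' : x ∈ C') : C = C' := by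
  obtain ⟨v, -, rfl⟩ := h
  obtain ⟨v', -, rfl⟩ := h'
  have hvv' : F.Reachable v' v := (Set.mem_setOf.mp hx').trans (Set.mem_setOf.mp hx).symm
  ext u
  exact ⟨fun hu => hvv'.trans hu, fun hu => hvv'.symm.trans hu⟩

/-- The 6-swap: on a chordless 6-circuit `v1⋯v6` whose alternating edges `v1v2 ∈ C1`,
`v3v4 ∈ C2`, `v5v6 ∈ C3` lie in three distinct circuits of the even factor `F`,
replacing them by `v1v6, v2v3, v4v5` merges `C1, C2, C3` into one circuit and
decreases the cost by exactly 4. -/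
theorem six_swap {V : Type*} [Fintype V] (G F : SimpleGraph V)
    (hcubic : IsCubic G) (hbridgeless : Bridgeless G) (hF : IsEvenFactor G F)
    (v1 v2 v3 v4 v5 v6 : V)
    (a12 : G.Adj v1 v2) (a23 : G.Adj v2 v3) (a34 : G.Adj v3 v4) (a45 : G.Adj v4 v5)
    (a56 : G.Adj v5 v6) (a61 : G.Adj v6 v1)
    (n13 : ¬ G.Adj v1 v3) (n14 : ¬ G.Adj v1 v4) (n15 : ¬ G.Adj v1 v5)
    (n24 : ¬ G.Adj v2 v4) (n25 : ¬ G.Adj v2 v5) (n26 : ¬ G.Adj v2 v6)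
    (n35 : ¬ G.Adj v3 v5) (n36 : ¬ G.Adj v3 v6) (n46 : ¬ G.Adj v4 v6)
    (C1 C2 C3 : Set V) (hC1 : IsCircuitOf F C1) (hC2 : IsCircuitOf F C2)
    (hC3 : IsCircuitOf F C3) (h12 : C1 ≠ C2) (h13 : C1 ≠ C3) (h23 : C2 ≠ C3)
    (e12 : s(v1, v2) ∈ F.edgeSet) (m1 : v1 ∈ C1) (m2 : v2 ∈ C1)
    (e34 : s(v3, v4) ∈ F.edgeSet) (m3 : v3 ∈ C2) (m4 : v4 ∈ C2)
    (e56 : s(v5, v6) ∈ F.edgeSet) (m5 : v5 ∈ C3) (m6 : v6 ∈ C3) :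
    let F' := SimpleGraph.fromEdgeSet
      ((F.edgeSet \ {s(v1, v2), s(v3, v4), s(v5, v6)}) ∪ {s(v1, v6), s(v2, v3), s(v4, v5)})
    IsEvenFactor G F' ∧
    (∃ C : Set V, IsCircuitOf F' C ∧ C1 ⊆ C ∧ C2 ⊆ C ∧ C3 ⊆ C) ∧
    cost F - cost F' = 4 := by
  classical
  intro F'
  have hF'def : F' = SimpleGraph.fromEdgeSet
      ((F.edgeSet \ {s(v1, v2), s(v3, v4), s(v5, v6)}) ∪ {s(v1, v6), s(v2, v3), s(v4, v5)}) :=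
    rfl
  obtain ⟨hFG, hd⟩ := hF
  have f12 : F.Adj v1 v2 := e12
  have f34 : F.Adj v3 v4 := e34
  have f56 : F.Adj v5 v6 := e56
  -- disjointness of distinct circuits
  have disj : ∀ {C C' : Set V}, IsCircuitOf F C → IsCircuitOf F C' → C ≠ C' →
      ∀ {x : V}, x ∈ C → x ∉ C' := by
    intro C C' hC hC' hne x hx hx'
    exact hne (circuit_eq_of_mem hC hC' hx hx')
  -- distinctness
  have ne12 : v1 ≠ v2 := f12.ne
  have ne34 : v3 ≠ v4 := f34.ne
  have ne56 : v5 ≠ v6 := f56.ne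
  have ne23 : v2 ≠ v3 := a23.ne
  have ne45 : v4 ≠ v5 := a45.ne
  have ne16 : v1 ≠ v6 := a61.ne'
  have ne13 : v1 ≠ v3 := fun h => disj hC1 hC2 h12 m1 (by rw [h]; exact m3)
  have ne14 : v1 ≠ v4 := fun h => disj hC1 hC2 h12 m1 (by rw [h]; exact m4)
  have ne24 : v2 ≠ v4 := fun h => disj hC1 hC2 h12 m2 (by rw [h]; exact m4)
  have ne15 : v1 ≠ v5 := fun h => disj hC1 hC3 h13 m1 (by rw [h]; exact m5)
  have ne25 : v2 ≠ v5 := fun h => disj hC1 hC3 h13 m2 (by rw [h]; exact m5)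
  have ne26 : v2 ≠ v6 := fun h => disj hC1 hC3 h13 m2 (by rw [h]; exact m6)
  have ne35 : v3 ≠ v5 := fun h => disj hC2 hC3 h23 m3 (by rw [h]; exact m5)
  have ne36 : v3 ≠ v6 := fun h => disj hC2 hC3 h23 m3 (by rw [h]; exact m6)
  have ne46 : v4 ≠ v6 := fun h => disj hC2 hC3 h23 m4 (by rw [h]; exact m6)
  -- adjacency description of F'
  have hadj : ∀ x y : V, F'.Adj x y ↔
      (F.Adj x y ∧ s(x, y) ≠ s(v1, v2) ∧ s(x, y) ≠ s(v3, v4) ∧ s(x, y) ≠ s(v5, v6)) ∨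
      (s(x, y) = s(v1, v6) ∨ s(x, y) = s(v2, v3) ∨ s(x, y) = s(v4, v5)) := by
    intro x y
    rw [hF'def, SimpleGraph.fromEdgeSet_adj]
    constructor
    · rintro ⟨hm, hxy⟩
      rcases hm with ⟨hE, hS⟩ | hN
      · left
        simp only [Set.mem_insert_iff, Set.mem_singleton_iff, not_or] at hS
        exact ⟨hE, hS.1, hS.2.1, hS.2.2⟩
      · right
        simpa using hN
    · rintro (⟨h, h1, h2, h3⟩ | hN)
      · exact ⟨Or.inl ⟨h, by simp [h1, h2, h3]⟩, h.ne⟩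
      · refine ⟨Or.inr (by simpa using hN), ?_⟩
        rcases hN with h | h | h <;>
          rcases Sym2.eq_iff.mp h with ⟨rfl, rfl⟩ | ⟨rfl, rfl⟩ <;>
          first
            | exact ne16 | exact ne16.symm | exact ne23 | exact ne23.symm
            | exact ne45 | exact ne45.symm
  -- degrees of F at the six vertices
  have degtwo : ∀ x y : V, F.Adj x y → deg F x = 2 :=
    fun x y hxy => (hd x).resolve_left (deg_ne_zero_of_adj hxy)
  -- second neighbors
  have nb : ∀ x y : V, F.Adj x y → ∃ z, z ≠ y ∧ F.Adj x z ∧ F.neighborSet x = {y, z} := by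
    intro x y hxy
    have h2 : (F.neighborSet x).ncard = 2 := by rw [← deg_ncard]; exact degtwo x y hxy
    obtain ⟨p, q, hpq, hs⟩ := Set.ncard_eq_two.mp h2
    have hy : y ∈ F.neighborSet x := hxy
    have hp : p ∈ F.neighborSet x := by rw [hs]; exact Set.mem_insert p {q}
    have hq : q ∈ F.neighborSet x := by rw [hs]; exact Set.mem_insert_of_mem p rfl
    rw [hs] at hy
    rcases hy with rfl | rfl
    · exact ⟨q, Ne.symm hpq, hq, hs⟩
    · exact ⟨p, hpq, hp, by rw [hs, Set.pair_comm]⟩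
  obtain ⟨x1, hx1ne, hx1adj, hnb1⟩ := nb v1 v2 f12
  obtain ⟨x2, hx2ne, hx2adj, hnb2⟩ := nb v2 v1 f12.symm
  obtain ⟨x3, hx3ne, hx3adj, hnb3⟩ := nb v3 v4 f34
  obtain ⟨x4, hx4ne, hx4adj, hnb4⟩ := nb v4 v3 f34.symm
  obtain ⟨x5, hx5ne, hx5adj, hnb5⟩ := nb v5 v6 f56
  obtain ⟨x6, hx6ne, hx6adj, hnb6⟩ := nb v6 v5 f56.symm
  have hx1C : x1 ∈ C1 := circuit_closed hC1 m1 hx1adj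
  have hx2C : x2 ∈ C1 := circuit_closed hC1 m2 hx2adj
  have hx3C : x3 ∈ C2 := circuit_closed hC2 m3 hx3adj
  have hx4C : x4 ∈ C2 := circuit_closed hC2 m4 hx4adj
  have hx5C : x5 ∈ C3 := circuit_closed hC3 m5 hx5adj
  have hx6C : x6 ∈ C3 := circuit_closed hC3 m6 hx6adj
  have hx1v3 : x1 ≠ v3 := fun h => disj hC1 hC2 h12 hx1C (by rw [h]; exact m3)
  have hx1v4 : x1 ≠ v4 := fun h => disj hC1 hC2 h12 hx1C (by rw [h]; exact m4)
  have hx1v5 : x1 ≠ v5 := fun h => disj hC1 hC3 h13 hx1C (by rw [h]; exact m5)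
  have hx1v6 : x1 ≠ v6 := fun h => disj hC1 hC3 h13 hx1C (by rw [h]; exact m6)
  have hx2v3 : x2 ≠ v3 := fun h => disj hC1 hC2 h12 hx2C (by rw [h]; exact m3)
  have hx2v4 : x2 ≠ v4 := fun h => disj hC1 hC2 h12 hx2C (by rw [h]; exact m4)
  have hx2v5 : x2 ≠ v5 := fun h => disj hC1 hC3 h13 hx2C (by rw [h]; exact m5)
  have hx2v6 : x2 ≠ v6 := fun h => disj hC1 hC3 h13 hx2C (by rw [h]; exact m6)
  have hx3v1 : x3 ≠ v1 := fun h => disj hC2 hC1 h12.symm hx3C (by rw [h]; exact m1)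
  have hx3v2 : x3 ≠ v2 := fun h => disj hC2 hC1 h12.symm hx3C (by rw [h]; exact m2)
  have hx3v5 : x3 ≠ v5 := fun h => disj hC2 hC3 h23 hx3C (by rw [h]; exact m5)
  have hx3v6 : x3 ≠ v6 := fun h => disj hC2 hC3 h23 hx3C (by rw [h]; exact m6)
  have hx4v1 : x4 ≠ v1 := fun h => disj hC2 hC1 h12.symm hx4C (by rw [h]; exact m1)
  have hx4v2 : x4 ≠ v2 := fun h => disj hC2 hC1 h12.symm hx4C (by rw [h]; exact m2)
  have hx4v5 : x4 ≠ v5 := fun h => disj hC2 hC3 h23 hx4C (by rw [h]; exact m5)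
  have hx4v6 : x4 ≠ v6 := fun h => disj hC2 hC3 h23 hx4C (by rw [h]; exact m6)
  have hx5v1 : x5 ≠ v1 := fun h => disj hC3 hC1 h13.symm hx5C (by rw [h]; exact m1)
  have hx5v2 : x5 ≠ v2 := fun h => disj hC3 hC1 h13.symm hx5C (by rw [h]; exact m2)
  have hx5v3 : x5 ≠ v3 := fun h => disj hC3 hC2 h23.symm hx5C (by rw [h]; exact m3)
  have hx5v4 : x5 ≠ v4 := fun h => disj hC3 hC2 h23.symm hx5C (by rw [h]; exact m4)
  have hx6v1 : x6 ≠ v1 := fun h => disj hC3 hC1 h13.symm hx6C (by rw [h]; exact m1)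
  have hx6v2 : x6 ≠ v2 := fun h => disj hC3 hC1 h13.symm hx6C (by rw [h]; exact m2)
  have hx6v3 : x6 ≠ v3 := fun h => disj hC3 hC2 h23.symm hx6C (by rw [h]; exact m3)
  have hx6v4 : x6 ≠ v4 := fun h => disj hC3 hC2 h23.symm hx6C (by rw [h]; exact m4)
  -- adjacency of F at the six vertices
  have hA1 : ∀ y, F.Adj v1 y ↔ y = v2 ∨ y = x1 := by
    intro y
    constructor
    · intro h
      have : y ∈ ({v2, x1} : Set V) := hnb1 ▸ (h : y ∈ F.neighborSet v1)
      simpa using this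
    · rintro (rfl | rfl)
      · exact f12
      · exact hx1adj
  have hA2 : ∀ y, F.Adj v2 y ↔ y = v1 ∨ y = x2 := by
    intro y
    constructor
    · intro h
      have : y ∈ ({v1, x2} : Set V) := hnb2 ▸ (h : y ∈ F.neighborSet v2)
      simpa using this
    · rintro (rfl | rfl)
      · exact f12.symm
      · exact hx2adj
  have hA3 : ∀ y, F.Adj v3 y ↔ y = v4 ∨ y = x3 := by
    intro y
    constructor
    · intro h
      have : y ∈ ({v4, x3} : Set V) := hnb3 ▸ (h : y ∈ F.neighborSet v3)
      simpa using this
    · rintro (rfl | rfl)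
      · exact f34
      · exact hx3adj
  have hA4 : ∀ y, F.Adj v4 y ↔ y = v3 ∨ y = x4 := by
    intro y
    constructor
    · intro h
      have : y ∈ ({v3, x4} : Set V) := hnb4 ▸ (h : y ∈ F.neighborSet v4)
      simpa using this
    · rintro (rfl | rfl)
      · exact f34.symm
      · exact hx4adj
  have hA5 : ∀ y, F.Adj v5 y ↔ y = v6 ∨ y = x5 := by
    intro y
    constructor
    · intro h
      have : y ∈ ({v6, x5} : Set V) := hnb5 ▸ (h : y ∈ F.neighborSet v5)
      simpa using this
    · rintro (rfl | rfl)
      · exact f56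
      · exact hx5adj
  have hA6 : ∀ y, F.Adj v6 y ↔ y = v5 ∨ y = x6 := by
    intro y
    constructor
    · intro h
      have : y ∈ ({v5, x6} : Set V) := hnb6 ▸ (h : y ∈ F.neighborSet v6)
      simpa using this
    · rintro (rfl | rfl)
      · exact f56.symm
      · exact hx6adj
  -- neighbor sets of F'
  have n1 : F'.neighborSet v1 = {x1, v6} := by
    ext y
    simp only [SimpleGraph.mem_neighborSet, Set.mem_insert_iff, Set.mem_singleton_iff]
    rw [hadj]
    constructor
    · rintro (⟨hy, h1, h2, h3⟩ | (h | h | h))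
      · rcases (hA1 y).mp hy with rfl | rfl
        · exact absurd rfl h1
        · exact Or.inl rfl
      · rcases Sym2.eq_iff.mp h with ⟨-, h'⟩ | ⟨h', -⟩
        · exact Or.inr h'
        · exact absurd h' ne16
      · rcases Sym2.eq_iff.mp h with ⟨h', -⟩ | ⟨h', -⟩
        · exact absurd h' ne12
        · exact absurd h' ne13
      · rcases Sym2.eq_iff.mp h with ⟨h', -⟩ | ⟨h', -⟩
        · exact absurd h' ne14
        · exact absurd h' ne15
    · rintro (rfl | rfl)
      · refine Or.inl ⟨hx1adj, ?_, ?_, ?_⟩ <;> intro h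
        · rcases Sym2.eq_iff.mp h with ⟨-, h'⟩ | ⟨h', -⟩
          · exact hx1ne h'
          · exact ne12 h'
        · rcases Sym2.eq_iff.mp h with ⟨h', -⟩ | ⟨h', -⟩
          · exact ne13 h'
          · exact ne14 h'
        · rcases Sym2.eq_iff.mp h with ⟨h', -⟩ | ⟨h', -⟩
          · exact ne15 h'
          · exact ne16 h'
      · exact Or.inr (Or.inl rfl)
  have n2 : F'.neighborSet v2 = {x2, v3} := by
    ext y
    simp only [SimpleGraph.mem_neighborSet, Set.mem_insert_iff, Set.mem_singleton_iff]
    rw [hadj]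
    constructor
    · rintro (⟨hy, h1, h2, h3⟩ | (h | h | h))
      · rcases (hA2 y).mp hy with rfl | rfl
        · exact absurd Sym2.eq_swap h1
        · exact Or.inl rfl
      · rcases Sym2.eq_iff.mp h with ⟨h', -⟩ | ⟨h', -⟩
        · exact absurd h' ne12.symm
        · exact absurd h' ne26
      · rcases Sym2.eq_iff.mp h with ⟨-, h'⟩ | ⟨h', -⟩
        · exact Or.inr h'
        · exact absurd h' ne23
      · rcases Sym2.eq_iff.mp h with ⟨h', -⟩ | ⟨h', -⟩
        · exact absurd h' ne24
        · exact absurd h' ne25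
    · rintro (rfl | rfl)
      · refine Or.inl ⟨hx2adj, ?_, ?_, ?_⟩ <;> intro h
        · rcases Sym2.eq_iff.mp h with ⟨h', -⟩ | ⟨-, h'⟩
          · exact ne12.symm h'
          · exact hx2ne h'
        · rcases Sym2.eq_iff.mp h with ⟨h', -⟩ | ⟨h', -⟩
          · exact ne23 h'
          · exact ne24 h'
        · rcases Sym2.eq_iff.mp h with ⟨h', -⟩ | ⟨h', -⟩
          · exact ne25 h'
          · exact ne26 h'
      · exact Or.inr (Or.inr (Or.inl rfl))
  have n3 : F'.neighborSet v3 = {x3, v2} := by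
    ext y
    simp only [SimpleGraph.mem_neighborSet, Set.mem_insert_iff, Set.mem_singleton_iff]
    rw [hadj]
    constructor
    · rintro (⟨hy, h1, h2, h3⟩ | (h | h | h))
      · rcases (hA3 y).mp hy with rfl | rfl
        · exact absurd rfl h2
        · exact Or.inl rfl
      · rcases Sym2.eq_iff.mp h with ⟨h', -⟩ | ⟨h', -⟩
        · exact absurd h' ne13.symm
        · exact absurd h' ne36
      · rcases Sym2.eq_iff.mp h with ⟨h', -⟩ | ⟨-, h'⟩
        · exact absurd h' ne23.symm
        · exact Or.inr h'
      · rcases Sym2.eq_iff.mp h with ⟨h', -⟩ | ⟨h', -⟩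
        · exact absurd h' ne34
        · exact absurd h' ne35
    · rintro (rfl | rfl)
      · refine Or.inl ⟨hx3adj, ?_, ?_, ?_⟩ <;> intro h
        · rcases Sym2.eq_iff.mp h with ⟨h', -⟩ | ⟨h', -⟩
          · exact ne13.symm h'
          · exact ne23.symm h'
        · rcases Sym2.eq_iff.mp h with ⟨-, h'⟩ | ⟨h', -⟩
          · exact hx3ne h'
          · exact ne34 h'
        · rcases Sym2.eq_iff.mp h with ⟨h', -⟩ | ⟨h', -⟩
          · exact ne35 h'
          · exact ne36 h'
      · exact Or.inr (Or.inr (Or.inl Sym2.eq_swap))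
  have n4 : F'.neighborSet v4 = {x4, v5} := by
    ext y
    simp only [SimpleGraph.mem_neighborSet, Set.mem_insert_iff, Set.mem_singleton_iff]
    rw [hadj]
    constructor
    · rintro (⟨hy, h1, h2, h3⟩ | (h | h | h))
      · rcases (hA4 y).mp hy with rfl | rfl
        · exact absurd Sym2.eq_swap h2
        · exact Or.inl rfl
      · rcases Sym2.eq_iff.mp h with ⟨h', -⟩ | ⟨h', -⟩
        · exact absurd h' ne14.symm
        · exact absurd h' ne46
      · rcases Sym2.eq_iff.mp h with ⟨h', -⟩ | ⟨h', -⟩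
        · exact absurd h' ne24.symm
        · exact absurd h' ne34.symm
      · rcases Sym2.eq_iff.mp h with ⟨-, h'⟩ | ⟨h', -⟩
        · exact Or.inr h'
        · exact absurd h' ne45
    · rintro (rfl | rfl)
      · refine Or.inl ⟨hx4adj, ?_, ?_, ?_⟩ <;> intro h
        · rcases Sym2.eq_iff.mp h with ⟨h', -⟩ | ⟨h', -⟩
          · exact ne14.symm h'
          · exact ne24.symm h'
        · rcases Sym2.eq_iff.mp h with ⟨h', -⟩ | ⟨-, h'⟩
          · exact ne34.symm h'
          · exact hx4ne h'
        · rcases Sym2.eq_iff.mp h with ⟨h', -⟩ | ⟨h', -⟩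
          · exact ne45 h'
          · exact ne46 h'
      · exact Or.inr (Or.inr (Or.inr rfl))
  have n5 : F'.neighborSet v5 = {x5, v4} := by
    ext y
    simp only [SimpleGraph.mem_neighborSet, Set.mem_insert_iff, Set.mem_singleton_iff]
    rw [hadj]
    constructor
    · rintro (⟨hy, h1, h2, h3⟩ | (h | h | h))
      · rcases (hA5 y).mp hy with rfl | rfl
        · exact absurd rfl h3
        · exact Or.inl rfl
      · rcases Sym2.eq_iff.mp h with ⟨h', -⟩ | ⟨h', -⟩
        · exact absurd h' ne15.symm
        · exact absurd h' ne56
      · rcases Sym2.eq_iff.mp h with ⟨h', -⟩ | ⟨h', -⟩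
        · exact absurd h' ne25.symm
        · exact absurd h' ne35.symm
      · rcases Sym2.eq_iff.mp h with ⟨h', -⟩ | ⟨-, h'⟩
        · exact absurd h' ne45.symm
        · exact Or.inr h'
    · rintro (rfl | rfl)
      · refine Or.inl ⟨hx5adj, ?_, ?_, ?_⟩ <;> intro h
        · rcases Sym2.eq_iff.mp h with ⟨h', -⟩ | ⟨h', -⟩
          · exact ne15.symm h'
          · exact ne25.symm h'
        · rcases Sym2.eq_iff.mp h with ⟨h', -⟩ | ⟨h', -⟩
          · exact ne35.symm h'
          · exact ne45.symm h'
        · rcases Sym2.eq_iff.mp h with ⟨-, h'⟩ | ⟨h', -⟩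
          · exact hx5ne h'
          · exact ne56 h'
      · exact Or.inr (Or.inr (Or.inr Sym2.eq_swap))
  have n6 : F'.neighborSet v6 = {x6, v1} := by
    ext y
    simp only [SimpleGraph.mem_neighborSet, Set.mem_insert_iff, Set.mem_singleton_iff]
    rw [hadj]
    constructor
    · rintro (⟨hy, h1, h2, h3⟩ | (h | h | h))
      · rcases (hA6 y).mp hy with rfl | rfl
        · exact absurd Sym2.eq_swap h3
        · exact Or.inl rfl
      · rcases Sym2.eq_iff.mp h with ⟨h', -⟩ | ⟨-, h'⟩
        · exact absurd h' ne16.symm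
        · exact Or.inr h'
      · rcases Sym2.eq_iff.mp h with ⟨h', -⟩ | ⟨h', -⟩
        · exact absurd h' ne26.symm
        · exact absurd h' ne36.symm
      · rcases Sym2.eq_iff.mp h with ⟨h', -⟩ | ⟨h', -⟩
        · exact absurd h' ne46.symm
        · exact absurd h' ne56.symm
    · rintro (rfl | rfl)
      · refine Or.inl ⟨hx6adj, ?_, ?_, ?_⟩ <;> intro h
        · rcases Sym2.eq_iff.mp h with ⟨h', -⟩ | ⟨h', -⟩
          · exact ne16.symm h'
          · exact ne26.symm h'
        · rcases Sym2.eq_iff.mp h with ⟨h', -⟩ | ⟨h', -⟩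
          · exact ne36.symm h'
          · exact ne46.symm h'
        · rcases Sym2.eq_iff.mp h with ⟨h', -⟩ | ⟨-, h'⟩
          · exact ne56.symm h'
          · exact hx6ne h'
      · exact Or.inr (Or.inl Sym2.eq_swap)
  have nother : ∀ v : V, v ≠ v1 → v ≠ v2 → v ≠ v3 → v ≠ v4 → v ≠ v5 → v ≠ v6 →
      F'.neighborSet v = F.neighborSet v := by
    intro v h1 h2 h3 h4 h5 h6
    ext y
    simp only [SimpleGraph.mem_neighborSet]
    rw [hadj]
    constructor
    · rintro (⟨hy, -, -, -⟩ | (h | h | h))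
      · exact hy
      · rcases Sym2.eq_iff.mp h with ⟨h', -⟩ | ⟨h', -⟩
        · exact absurd h' h1
        · exact absurd h' h6
      · rcases Sym2.eq_iff.mp h with ⟨h', -⟩ | ⟨h', -⟩
        · exact absurd h' h2
        · exact absurd h' h3
      · rcases Sym2.eq_iff.mp h with ⟨h', -⟩ | ⟨h', -⟩
        · exact absurd h' h4
        · exact absurd h' h5
    · intro hy
      refine Or.inl ⟨hy, ?_, ?_, ?_⟩ <;> intro h
      · rcases Sym2.eq_iff.mp h with ⟨h', -⟩ | ⟨h', -⟩
        · exact h1 h'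
        · exact h2 h'
      · rcases Sym2.eq_iff.mp h with ⟨h', -⟩ | ⟨h', -⟩
        · exact h3 h'
        · exact h4 h'
      · rcases Sym2.eq_iff.mp h with ⟨h', -⟩ | ⟨h', -⟩
        · exact h5 h'
        · exact h6 h'
  -- the degrees of F'
  have degF'1 : deg F' v1 = 2 := by
    rw [deg_ncard, n1, Set.ncard_pair hx1v6]
  have degF'2 : deg F' v2 = 2 := by
    rw [deg_ncard, n2, Set.ncard_pair hx2v3]
  have degF'3 : deg F' v3 = 2 := by
    rw [deg_ncard, n3, Set.ncard_pair hx3v2]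
  have degF'4 : deg F' v4 = 2 := by
    rw [deg_ncard, n4, Set.ncard_pair hx4v5]
  have degF'5 : deg F' v5 = 2 := by
    rw [deg_ncard, n5, Set.ncard_pair hx5v4]
  have degF'6 : deg F' v6 = 2 := by
    rw [deg_ncard, n6, Set.ncard_pair hx6v1]
  have hdeg' : ∀ v, deg F' v = deg F v := by
    intro v
    by_cases h1 : v = v1
    · rw [h1, degF'1, degtwo v1 v2 f12]
    by_cases h2 : v = v2
    · rw [h2, degF'2, degtwo v2 v1 f12.symm]
    by_cases h3 : v = v3
    · rw [h3, degF'3, degtwo v3 v4 f34]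
    by_cases h4 : v = v4
    · rw [h4, degF'4, degtwo v4 v3 f34.symm]
    by_cases h5 : v = v5
    · rw [h5, degF'5, degtwo v5 v6 f56]
    by_cases h6 : v = v6
    · rw [h6, degF'6, degtwo v6 v5 f56.symm]
    rw [deg_ncard, deg_ncard, nother v h1 h2 h3 h4 h5 h6]
  -- F' is an even factor
  have hEF : IsEvenFactor G F' := by
    constructor
    · intro x y h
      rw [hadj] at h
      rcases h with ⟨hf, -, -, -⟩ | (h | h | h)
      · exact hFG hf
      · rcases Sym2.eq_iff.mp h with ⟨rfl, rfl⟩ | ⟨rfl, rfl⟩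
        · exact a61.symm
        · exact a61
      · rcases Sym2.eq_iff.mp h with ⟨rfl, rfl⟩ | ⟨rfl, rfl⟩
        · exact a23
        · exact a23.symm
      · rcases Sym2.eq_iff.mp h with ⟨rfl, rfl⟩ | ⟨rfl, rfl⟩
        · exact a45
        · exact a45.symm
    · intro v
      rw [hdeg' v]
      exact hd v
  -- non-membership facts
  have hv1C2 : v1 ∉ C2 := disj hC1 hC2 h12 m1
  have hv3C1 : v3 ∉ C1 := disj hC2 hC1 h12.symm m3
  have hv5C1 : v5 ∉ C1 := disj hC3 hC1 h13.symm m5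
  have hv5C2 : v5 ∉ C2 := disj hC3 hC2 h23.symm m5
  have hv1C3 : v1 ∉ C3 := disj hC1 hC3 h13 m1
  have hv3C3 : v3 ∉ C3 := disj hC2 hC3 h23 m3
  -- transferring walks of F avoiding the removed edges into F'
  have etrans : ∀ {x u : V} (w : F.Walk x u), s(v1, v2) ∉ w.edges → s(v3, v4) ∉ w.edges →
      s(v5, v6) ∉ w.edges → F'.Reachable x u := by
    intro x u w h1 h2 h3
    have hsub : ∀ e ∈ w.edges, e ∈ F'.edgeSet := by
      intro e he
      have heF : e ∈ F.edgeSet := w.edges_subset_edgeSet he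
      rw [hF'def, SimpleGraph.edgeSet_fromEdgeSet]
      refine ⟨Or.inl ⟨heF, ?_⟩, ?_⟩
      · simp only [Set.mem_insert_iff, Set.mem_singleton_iff, not_or]
        exact ⟨fun h => h1 (h ▸ he), fun h => h2 (h ▸ he), fun h => h3 (h ▸ he)⟩
      · exact fun hdiag => (SimpleGraph.not_isDiag_of_mem_edgeSet F heF) hdiag
    exact ⟨w.transfer F' hsub⟩
  have avoid : ∀ {x u : V} (w : F.Walk x u) (CC : Set V), IsCircuitOf F CC → x ∈ CC →
      ∀ z z' : V, z ∉ CC → s(z, z') ∉ w.edges := by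
    intro x u w CC hCC hx z z' hz he
    exact hz (walk_support_closed (fun a b ha hab => circuit_closed hCC ha hab) w hx z
      (SimpleGraph.Walk.fst_mem_support_of_mem_edges w he))
  have htr1 : ∀ {x u : V} (w : F.Walk x u), x ∈ C1 → s(v1, v2) ∉ w.edges →
      F'.Reachable x u := by
    intro x u w hx hno
    exact etrans w hno (avoid w C1 hC1 hx v3 v4 hv3C1) (avoid w C1 hC1 hx v5 v6 hv5C1)
  have htr2 : ∀ {x u : V} (w : F.Walk x u), x ∈ C2 → s(v3, v4) ∉ w.edges →
      F'.Reachable x u := by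
    intro x u w hx hno
    exact etrans w (avoid w C2 hC2 hx v1 v2 hv1C2) hno (avoid w C2 hC2 hx v5 v6 hv5C2)
  have htr3 : ∀ {x u : V} (w : F.Walk x u), x ∈ C3 → s(v5, v6) ∉ w.edges →
      F'.Reachable x u := by
    intro x u w hx hno
    exact etrans w (avoid w C3 hC3 hx v1 v2 hv1C3) (avoid w C3 hC3 hx v3 v4 hv3C3) hno
  -- the endpoints of each removed edge are still connected in F'
  have r12 : F'.Reachable v1 v2 := by
    obtain ⟨w0⟩ := no_bridge_of_even F hd f12
    have hE : ∀ e ∈ w0.edges, e ∈ F.edgeSet \ {s(v1, v2)} := by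
      intro e he
      have h := w0.edges_subset_edgeSet he
      rwa [SimpleGraph.edgeSet_deleteEdges] at h
    refine htr1 (w0.transfer F fun e he => (hE e he).1) m1 ?_
    rw [SimpleGraph.Walk.edges_transfer]
    exact fun hc => (hE _ hc).2 rfl
  have r34 : F'.Reachable v3 v4 := by
    obtain ⟨w0⟩ := no_bridge_of_even F hd f34
    have hE : ∀ e ∈ w0.edges, e ∈ F.edgeSet \ {s(v3, v4)} := by
      intro e he
      have h := w0.edges_subset_edgeSet he
      rwa [SimpleGraph.edgeSet_deleteEdges] at h
    refine htr2 (w0.transfer F fun e he => (hE e he).1) m3 ?_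
    rw [SimpleGraph.Walk.edges_transfer]
    exact fun hc => (hE _ hc).2 rfl
  have r56 : F'.Reachable v5 v6 := by
    obtain ⟨w0⟩ := no_bridge_of_even F hd f56
    have hE : ∀ e ∈ w0.edges, e ∈ F.edgeSet \ {s(v5, v6)} := by
      intro e he
      have h := w0.edges_subset_edgeSet he
      rwa [SimpleGraph.edgeSet_deleteEdges] at h
    refine htr3 (w0.transfer F fun e he => (hE e he).1) m5 ?_
    rw [SimpleGraph.Walk.edges_transfer]
    exact fun hc => (hE _ hc).2 rfl
  have r16 : F'.Adj v1 v6 := by rw [hadj]; exact Or.inr (Or.inl rfl)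
  have r23 : F'.Adj v2 v3 := by rw [hadj]; exact Or.inr (Or.inr (Or.inl rfl))
  have r45 : F'.Adj v4 v5 := by rw [hadj]; exact Or.inr (Or.inr (Or.inr rfl))
  have R3 : F'.Reachable v1 v3 := r12.trans r23.reachable
  have R6 : F'.Reachable v1 v6 := r16.reachable
  have R5 : F'.Reachable v1 v5 := R6.trans r56.symm
  have R4 : F'.Reachable v1 v4 := R3.trans r34
  -- reaching within a circuit
  have reach_in : ∀ (a b : V) (CC : Set V), IsCircuitOf F CC → a ∈ CC → b ∈ CC →
      (∀ {x u : V} (w : F.Walk x u), x ∈ CC → s(a, b) ∉ w.edges → F'.Reachable x u) →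
      ∀ u ∈ CC, F'.Reachable a u ∨ F'.Reachable b u := by
    intro a b CC hCC ha hb htr u hu
    obtain ⟨w⟩ := circuit_reach hCC ha hu
    by_cases he : s(a, b) ∈ (w.toPath : F.Walk a u).edges
    · obtain ⟨q, hq1, hq2⟩ := path_start _ w.toPath.2 he
      exact Or.inr (htr q hb fun hc => hq1 (SimpleGraph.Walk.fst_mem_support_of_mem_edges q hc))
    · exact Or.inl (htr (w.toPath : F.Walk a u) ha he)
  have reachU : ∀ u ∈ C1 ∪ C2 ∪ C3, F'.Reachable v1 u := by
    intro u hu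
    rcases hu with (hu | hu) | hu
    · rcases reach_in v1 v2 C1 hC1 m1 m2 (fun {x u} w hx hno => htr1 w hx hno) u hu with h | h
      · exact h
      · exact r12.trans h
    · rcases reach_in v3 v4 C2 hC2 m3 m4 (fun {x u} w hx hno => htr2 w hx hno) u hu with h | h
      · exact R3.trans h
      · exact R4.trans h
    · rcases reach_in v5 v6 C3 hC3 m5 m6 (fun {x u} w hx hno => htr3 w hx hno) u hu with h | h
      · exact R5.trans h
      · exact R6.trans h
  have hUeq : C1 ∪ C2 ∪ C3 = {u | F'.Reachable v1 u} := by
    apply Set.eq_of_subset_of_subset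
    · intro u hu
      exact reachU u hu
    · intro u hu
      refine reach_closed (H := F') (Q := fun z => z ∈ C1 ∪ C2 ∪ C3) ?_ hu
        (Or.inl (Or.inl m1))
      intro x y hx hxy
      rw [hadj] at hxy
      rcases hxy with ⟨hf, -, -, -⟩ | (h | h | h)
      · rcases hx with (hx | hx) | hx
        · exact Or.inl (Or.inl (circuit_closed hC1 hx hf))
        · exact Or.inl (Or.inr (circuit_closed hC2 hx hf))
        · exact Or.inr (circuit_closed hC3 hx hf)
      · rcases Sym2.eq_iff.mp h with ⟨-, rfl⟩ | ⟨-, rfl⟩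
        · exact Or.inr m6
        · exact Or.inl (Or.inl m1)
      · rcases Sym2.eq_iff.mp h with ⟨-, rfl⟩ | ⟨-, rfl⟩
        · exact Or.inl (Or.inr m3)
        · exact Or.inl (Or.inl m2)
      · rcases Sym2.eq_iff.mp h with ⟨-, rfl⟩ | ⟨-, rfl⟩
        · exact Or.inr m5
        · exact Or.inl (Or.inr m4)
  have hUcirc : IsCircuitOf F' (C1 ∪ C2 ∪ C3) := by
    refine ⟨v1, ?_, hUeq⟩
    rw [degF'1]
    norm_num
  -- adjacency outside the union is unchanged
  have hUc : ∀ {x y : V}, x ∉ C1 ∪ C2 ∪ C3 → (F'.Adj x y ↔ F.Adj x y) := by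
    intro x y hx
    rw [hadj]
    constructor
    · rintro (⟨hf, -, -, -⟩ | (h | h | h))
      · exact hf
      · rcases Sym2.eq_iff.mp h with ⟨rfl, -⟩ | ⟨rfl, -⟩
        · exact absurd (Or.inl (Or.inl m1)) hx
        · exact absurd (Or.inr m6) hx
      · rcases Sym2.eq_iff.mp h with ⟨rfl, -⟩ | ⟨rfl, -⟩
        · exact absurd (Or.inl (Or.inl m2)) hx
        · exact absurd (Or.inl (Or.inr m3)) hx
      · rcases Sym2.eq_iff.mp h with ⟨rfl, -⟩ | ⟨rfl, -⟩
        · exact absurd (Or.inl (Or.inr m4)) hx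
        · exact absurd (Or.inr m5) hx
    · intro hf
      refine Or.inl ⟨hf, ?_, ?_, ?_⟩ <;> intro h
      · rcases Sym2.eq_iff.mp h with ⟨rfl, -⟩ | ⟨rfl, -⟩
        · exact hx (Or.inl (Or.inl m1))
        · exact hx (Or.inl (Or.inl m2))
      · rcases Sym2.eq_iff.mp h with ⟨rfl, -⟩ | ⟨rfl, -⟩
        · exact hx (Or.inl (Or.inr m3))
        · exact hx (Or.inl (Or.inr m4))
      · rcases Sym2.eq_iff.mp h with ⟨rfl, -⟩ | ⟨rfl, -⟩
        · exact hx (Or.inr m5)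
        · exact hx (Or.inr m6)
  have hstepU : ∀ {x y : V}, x ∉ C1 ∪ C2 ∪ C3 → F.Adj x y → y ∉ C1 ∪ C2 ∪ C3 := by
    intro x y hx hf hy
    rcases hy with (hy | hy) | hy
    · exact hx (Or.inl (Or.inl (circuit_closed hC1 hy hf.symm)))
    · exact hx (Or.inl (Or.inr (circuit_closed hC2 hy hf.symm)))
    · exact hx (Or.inr (circuit_closed hC3 hy hf.symm))
  have class_eq : ∀ v : V, v ∉ C1 ∪ C2 ∪ C3 →
      {u | F'.Reachable v u} = {u | F.Reachable v u} := by
    intro v hv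
    ext u
    simp only [Set.mem_setOf_eq]
    constructor
    · intro h
      exact (reach_closed (H := F') (Q := fun z => F.Reachable v z ∧ z ∉ C1 ∪ C2 ∪ C3)
        (fun x y hx hxy => by
          have hf : F.Adj x y := (hUc hx.2).mp hxy
          exact ⟨hx.1.trans hf.reachable, hstepU hx.2 hf⟩)
        h ⟨SimpleGraph.Reachable.refl v, hv⟩).1
    · intro h
      exact (reach_closed (H := F) (Q := fun z => F'.Reachable v z ∧ z ∉ C1 ∪ C2 ∪ C3)
        (fun x y hx hxy =>
          ⟨hx.1.trans ((hUc hx.2).mpr hxy).reachable, hstepU hx.2 hxy⟩)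
        h ⟨SimpleGraph.Reachable.refl v, hv⟩).1
  -- the collections of circuits
  have hcF : {C : Set V | IsCircuitOf F C} =
      insert C1 (insert C2 (insert C3
        {C : Set V | IsCircuitOf F C ∧ C ≠ C1 ∧ C ≠ C2 ∧ C ≠ C3})) := by
    ext C
    simp only [Set.mem_setOf_eq, Set.mem_insert_iff]
    constructor
    · intro h
      by_cases h1 : C = C1
      · exact Or.inl h1
      by_cases h2 : C = C2
      · exact Or.inr (Or.inl h2)
      by_cases h3 : C = C3
      · exact Or.inr (Or.inr (Or.inl h3))
      exact Or.inr (Or.inr (Or.inr ⟨h, h1, h2, h3⟩))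
    · rintro (rfl | rfl | rfl | ⟨h, -, -, -⟩)
      · exact hC1
      · exact hC2
      · exact hC3
      · exact h
  have hcF' : {C : Set V | IsCircuitOf F' C} =
      insert (C1 ∪ C2 ∪ C3)
        {C : Set V | IsCircuitOf F C ∧ C ≠ C1 ∧ C ≠ C2 ∧ C ≠ C3} := by
    ext C
    simp only [Set.mem_setOf_eq, Set.mem_insert_iff]
    constructor
    · rintro ⟨v, hdv, rfl⟩
      by_cases hv : v ∈ C1 ∪ C2 ∪ C3
      · left
        have hrv : F'.Reachable v1 v := reachU v hv
        apply Set.eq_of_subset_of_subset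
        · intro u hu
          rw [hUeq]
          exact hrv.trans hu
        · intro u hu
          exact hrv.symm.trans (reachU u hu)
      · right
        have hcirc : IsCircuitOf F {u | F'.Reachable v u} := by
          refine ⟨v, by rwa [hdeg' v] at hdv, (class_eq v hv)⟩
        have hself : v ∈ {u | F'.Reachable v u} := SimpleGraph.Reachable.refl v
        refine ⟨hcirc, ?_, ?_, ?_⟩
        · intro hc
          exact hv (Or.inl (Or.inl (hc ▸ hself)))
        · intro hc
          exact hv (Or.inl (Or.inr (hc ▸ hself)))
        · intro hc
          exact hv (Or.inr (hc ▸ hself))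
    · rintro (rfl | ⟨⟨v, hdv, rfl⟩, hn1, hn2, hn3⟩)
      · exact hUcirc
      · have hself : v ∈ {u | F.Reachable v u} := SimpleGraph.Reachable.refl v
        have hv : v ∉ C1 ∪ C2 ∪ C3 := by
          rintro ((hv | hv) | hv)
          · exact hn1 (circuit_eq_of_mem ⟨v, hdv, rfl⟩ hC1 hself hv)
          · exact hn2 (circuit_eq_of_mem ⟨v, hdv, rfl⟩ hC2 hself hv)
          · exact hn3 (circuit_eq_of_mem ⟨v, hdv, rfl⟩ hC3 hself hv)
        refine ⟨v, ?_, (class_eq v hv).symm⟩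
        rw [hdeg' v]
        exact hdv
  have hUnotR : (C1 ∪ C2 ∪ C3) ∉
      {C : Set V | IsCircuitOf F C ∧ C ≠ C1 ∧ C ≠ C2 ∧ C ≠ C3} := by
    rintro ⟨⟨v, hdv, hEv⟩, -, -, -⟩
    have hself : v ∈ C1 ∪ C2 ∪ C3 := by
      rw [hEv]
      exact SimpleGraph.Reachable.refl v
    have hselfc : v ∈ ({u | F.Reachable v u} : Set V) := SimpleGraph.Reachable.refl v
    rcases hself with (hv | hv) | hv
    · have hU1 : C1 ∪ C2 ∪ C3 = C1 :=
        circuit_eq_of_mem ⟨v, hdv, hEv⟩ hC1 (by rw [hEv]; exact hselfc) hv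
      exact hv3C1 (hU1 ▸ (Or.inl (Or.inr m3) : v3 ∈ C1 ∪ C2 ∪ C3))
    · have hU2 : C1 ∪ C2 ∪ C3 = C2 :=
        circuit_eq_of_mem ⟨v, hdv, hEv⟩ hC2 (by rw [hEv]; exact hselfc) hv
      exact hv1C2 (hU2 ▸ (Or.inl (Or.inl m1) : v1 ∈ C1 ∪ C2 ∪ C3))
    · have hU3 : C1 ∪ C2 ∪ C3 = C3 :=
        circuit_eq_of_mem ⟨v, hdv, hEv⟩ hC3 (by rw [hEv]; exact hselfc) hv
      exact hv1C3 (hU3 ▸ (Or.inl (Or.inl m1) : v1 ∈ C1 ∪ C2 ∪ C3))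
  have hC1not : C1 ∉ insert C2 (insert C3
      {C : Set V | IsCircuitOf F C ∧ C ≠ C1 ∧ C ≠ C2 ∧ C ≠ C3}) := by
    simp only [Set.mem_insert_iff, Set.mem_setOf_eq]
    rintro (h | h | ⟨-, hne, -, -⟩)
    · exact h12 h
    · exact h13 h
    · exact hne rfl
  have hC2not : C2 ∉ insert C3
      {C : Set V | IsCircuitOf F C ∧ C ≠ C1 ∧ C ≠ C2 ∧ C ≠ C3} := by
    simp only [Set.mem_insert_iff, Set.mem_setOf_eq]
    rintro (h | ⟨-, -, hne, -⟩)
    · exact h23 h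
    · exact hne rfl
  have hC3not : C3 ∉ {C : Set V | IsCircuitOf F C ∧ C ≠ C1 ∧ C ≠ C2 ∧ C ≠ C3} := by
    rintro ⟨-, -, -, hne⟩
    exact hne rfl
  have hnF : numCirc F =
      {C : Set V | IsCircuitOf F C ∧ C ≠ C1 ∧ C ≠ C2 ∧ C ≠ C3}.ncard + 3 := by
    have e1 : numCirc F = {C : Set V | IsCircuitOf F C}.ncard := Nat.card_coe_set_eq _
    rw [e1, hcF, Set.ncard_insert_of_notMem hC1not (Set.toFinite _),
      Set.ncard_insert_of_notMem hC2not (Set.toFinite _),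
      Set.ncard_insert_of_notMem hC3not (Set.toFinite _)]
  have hnF' : numCirc F' =
      {C : Set V | IsCircuitOf F C ∧ C ≠ C1 ∧ C ≠ C2 ∧ C ≠ C3}.ncard + 1 := by
    have e1 : numCirc F' = {C : Set V | IsCircuitOf F' C}.ncard := Nat.card_coe_set_eq _
    rw [e1, hcF', Set.ncard_insert_of_notMem hUnotR (Set.toFinite _)]
  have hiso : numIso F' = numIso F :=
    Nat.card_congr (Equiv.subtypeEquivRight fun v => by rw [hdeg' v])
  refine ⟨hEF, ⟨C1 ∪ C2 ∪ C3, hUcirc, fun x hx => Or.inl (Or.inl hx),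
    fun x hx => Or.inl (Or.inr hx), fun x hx => Or.inr hx⟩, ?_⟩
  simp only [cost, hnF, hnF', hiso]
  push_cast
  ring
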